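/- arXiv:2212.10317 — 2 statements merged into one kernel-verified Lean document; each statement's English description precedes it below -/
import Mathlib

section
/- (Expected decay under Gaussian model with stable expected returns) Let μ ~ N(0, σμ²) and ε ~ N(0, σε²) be independent, r̄ = μ + ε, and suppose the post-sample mean return is r̄^OOS = μ + ε' with E[ε' | σ(μ, ε)] = 0. Then E[sign(r̄)·(r̄ − r̄^OOS) | σ(r̄)] = (σε²/(σμ² + σε²))·|r̄| almost surely. -/
open MeasureTheory ProbabilityTheory
open scoped NNReal

/-- sign convention: 1 if x ≥ 0, -1 if x < 0 -/
noncomputable def sgn (x : ℝ) : ℝ := if 0 ≤ x then 1 else -1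

section Aux
open Real
open scoped ENNReal

namespace GED

noncomputable def T (a b : ℝ) : (ℝ × ℝ) →ₗ[ℝ] ℝ × ℝ :=
  Matrix.toLin (Module.Basis.finTwoProd ℝ) (Module.Basis.finTwoProd ℝ)
    !![(a-b)/(a+b), 2*a/(a+b); 2*b/(a+b), (b-a)/(a+b)]

lemma T_apply (a b : ℝ) (p : ℝ × ℝ) :
    T a b p = ((a-b)/(a+b)*p.1 + 2*a/(a+b)*p.2, 2*b/(a+b)*p.1 + (b-a)/(a+b)*p.2) :=
  Matrix.toLin_finTwoProd_apply _ _ _ _ _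

lemma T_det {a b : ℝ} (hab : a + b ≠ 0) : LinearMap.det (T a b) = -1 := by
  rw [T, LinearMap.det_toLin, Matrix.det_fin_two_of]
  field_simp
  ring

lemma T_sum (a b : ℝ) (hab : a + b ≠ 0) (p : ℝ × ℝ) : (T a b p).1 + (T a b p).2 = p.1 + p.2 := by
  rw [T_apply]; field_simp; ring

lemma T_snd_add (a b : ℝ) (hab : a + b ≠ 0) (p : ℝ × ℝ) :
    p.2 + (T a b p).2 = 2*b/(a+b) * (p.1 + p.2) := by
  rw [T_apply]; field_simp; ring

lemma T_quad {a b : ℝ} (ha : a ≠ 0) (hb : b ≠ 0) (hab : a + b ≠ 0) (p : ℝ × ℝ) :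
    (T a b p).1^2/a + (T a b p).2^2/b = p.1^2/a + p.2^2/b := by
  rw [T_apply]; field_simp; ring

lemma T_invol (a b : ℝ) (hab : a + b ≠ 0) (p : ℝ × ℝ) : T a b (T a b p) = p := by
  rw [T_apply, T_apply]
  ext <;> (simp only []; field_simp; ring)

lemma T_continuous (a b : ℝ) : Continuous (T a b) := (T a b).continuous_of_finiteDimensional

lemma T_map_volume {a b : ℝ} (hab : a + b ≠ 0) :
    Measure.map (T a b) (volume : Measure (ℝ × ℝ)) = volume := by
  rw [Measure.map_linearMap_addHaar_eq_smul_addHaar _ (by rw [T_det hab]; norm_num)]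
  rw [T_det hab]
  norm_num

lemma prod_gaussian_eq_withDensity (vμ vε : ℝ≥0) (hvμ : vμ ≠ 0) (hvε : vε ≠ 0) :
    (gaussianReal 0 vμ).prod (gaussianReal 0 vε) =
      (volume : Measure (ℝ × ℝ)).withDensity
        (fun p => gaussianPDF 0 vμ p.1 * gaussianPDF 0 vε p.2) := by
  refine Measure.prod_eq fun s t hs ht => ?_
  rw [MeasureTheory.Measure.volume_eq_prod, withDensity_apply _ (hs.prod ht), ← Measure.prod_restrict,
    lintegral_prod_mul (measurable_gaussianPDF 0 vμ).aemeasurable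
      (measurable_gaussianPDF 0 vε).aemeasurable,
    gaussianReal_apply 0 hvμ s, gaussianReal_apply 0 hvε t]

lemma integrable_id_gaussian (v : ℝ≥0) (hv : v ≠ 0) :
    Integrable (fun x : ℝ => x) (gaussianReal 0 v) := by
  rw [gaussianReal_of_var_ne_zero 0 hv,
    integrable_withDensity_iff (measurable_gaussianPDF 0 v)
      (Filter.Eventually.of_forall fun x => ENNReal.ofReal_lt_top)]
  have hpos : (0:ℝ) < (2 * (v:ℝ))⁻¹ := by positivity
  have := (integrable_mul_exp_neg_mul_sq hpos).const_mul ((Real.sqrt (2 * π * v))⁻¹)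
  refine this.congr ?_
  refine Filter.Eventually.of_forall fun x => ?_
  simp only [gaussianPDF, ENNReal.toReal_ofReal (gaussianPDFReal_nonneg 0 v x)]
  simp only [gaussianPDFReal, sub_zero]
  rw [show -(2*(v:ℝ))⁻¹*x^2 = -x^2/(2*(v:ℝ)) by ring]
  ring

section Main

variable {vμ vε : ℝ≥0} (hvμ : vμ ≠ 0) (hvε : vε ≠ 0)

lemma coe_pos (hv : vμ ≠ 0) : (0:ℝ) < (vμ:ℝ) := by positivity

lemma F_comp_T (hvμ : vμ ≠ 0) (hvε : vε ≠ 0) (p : ℝ × ℝ) :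
    gaussianPDF 0 vμ (T vμ vε p).1 * gaussianPDF 0 vε (T vμ vε p).2
      = gaussianPDF 0 vμ p.1 * gaussianPDF 0 vε p.2 := by
  have ha : (vμ:ℝ) ≠ 0 := ne_of_gt (coe_pos hvμ)
  have hb : (vε:ℝ) ≠ 0 := ne_of_gt (coe_pos hvε)
  have hab : (vμ:ℝ) + (vε:ℝ) ≠ 0 := by positivity
  simp only [gaussianPDF]
  rw [← ENNReal.ofReal_mul (gaussianPDFReal_nonneg 0 vμ _),
    ← ENNReal.ofReal_mul (gaussianPDFReal_nonneg 0 vμ _)]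
  congr 1
  simp only [gaussianPDFReal, sub_zero]
  rw [show ∀ c₁ c₂ e₁ e₂ : ℝ, c₁ * rexp e₁ * (c₂ * rexp e₂) = c₁ * c₂ * rexp (e₁ + e₂) by
    intro c₁ c₂ e₁ e₂; rw [Real.exp_add]; ring,
    show ∀ c₁ c₂ e₁ e₂ : ℝ, c₁ * rexp e₁ * (c₂ * rexp e₂) = c₁ * c₂ * rexp (e₁ + e₂) by
    intro c₁ c₂ e₁ e₂; rw [Real.exp_add]; ring]
  have hq := T_quad ha hb hab p
  have he : -((T (vμ:ℝ) (vε:ℝ)) p).1^2/(2*(vμ:ℝ)) + -((T (vμ:ℝ) (vε:ℝ)) p).2^2/(2*(vε:ℝ))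
      = -p.1^2/(2*(vμ:ℝ)) + -p.2^2/(2*(vε:ℝ)) := by linear_combination (-1/2 : ℝ) * hq
  rw [he]

lemma T_measurePreserving (hvμ : vμ ≠ 0) (hvε : vε ≠ 0) :
    MeasurePreserving (T vμ vε)
      ((gaussianReal 0 vμ).prod (gaussianReal 0 vε))
      ((gaussianReal 0 vμ).prod (gaussianReal 0 vε)) := by
  have ha : (vμ:ℝ) ≠ 0 := ne_of_gt (coe_pos hvμ)
  have hb : (vε:ℝ) ≠ 0 := ne_of_gt (coe_pos hvε)
  have hab : (vμ:ℝ) + (vε:ℝ) ≠ 0 := by positivity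
  have hTmeas : Measurable (T vμ vε) := (T_continuous _ _).measurable
  refine ⟨hTmeas, ?_⟩
  rw [prod_gaussian_eq_withDensity vμ vε hvμ hvε]
  set F : ℝ × ℝ → ℝ≥0∞ := fun p => gaussianPDF 0 vμ p.1 * gaussianPDF 0 vε p.2 with hF
  have hFmeas : Measurable F :=
    ((measurable_gaussianPDF 0 vμ).comp measurable_fst).mul
      ((measurable_gaussianPDF 0 vε).comp measurable_snd)
  ext s hs
  rw [Measure.map_apply hTmeas hs, withDensity_apply _ (hTmeas hs), withDensity_apply _ hs,
    ← lintegral_indicator (hTmeas hs) _, ← lintegral_indicator hs _]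
  have hFT : F = F ∘ (T (vμ:ℝ) (vε:ℝ)) := by
    funext p; exact (F_comp_T hvμ hvε p).symm
  have hkey : ∀ x, (T (vμ:ℝ) (vε:ℝ) ⁻¹' s).indicator F x = s.indicator F (T (vμ:ℝ) (vε:ℝ) x) := by
    intro x
    calc (T (vμ:ℝ) (vε:ℝ) ⁻¹' s).indicator F x
        = (T (vμ:ℝ) (vε:ℝ) ⁻¹' s).indicator (F ∘ (T (vμ:ℝ) (vε:ℝ))) x := by rw [← hFT]
      _ = s.indicator F (T (vμ:ℝ) (vε:ℝ) x) := Set.indicator_comp_right _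
  simp_rw [hkey]
  rw [← lintegral_map (hFmeas.indicator hs) hTmeas, T_map_volume hab]

noncomputable def Teqv (vμ vε : ℝ≥0) (hvμ : vμ ≠ 0) (hvε : vε ≠ 0) : (ℝ × ℝ) ≃ᵐ (ℝ × ℝ) :=
{ toFun := T vμ vε
  invFun := T vμ vε
  left_inv := fun p => T_invol _ _ (by positivity) p
  right_inv := fun p => T_invol _ _ (by positivity) p
  measurable_toFun := (T_continuous _ _).measurable
  measurable_invFun := (T_continuous _ _).measurable }

lemma measurable_sgn : Measurable sgn := by
  unfold sgn
  exact Measurable.ite (measurableSet_le measurable_const measurable_id)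
    measurable_const measurable_const

lemma sgn_mul_self (s : ℝ) : sgn s * s = |s| := by
  unfold sgn
  split_ifs with h
  · rw [one_mul, abs_of_nonneg h]
  · rw [abs_of_neg (lt_of_not_ge h)]; ring

lemma key_integral (hvμ : vμ ≠ 0) (hvε : vε ≠ 0) {B : Set ℝ} (hB : MeasurableSet B) :
    ∫ p in (fun p : ℝ × ℝ => p.1 + p.2) ⁻¹' B, sgn (p.1 + p.2) * p.2
        ∂((gaussianReal 0 vμ).prod (gaussianReal 0 vε))
      = ∫ p in (fun p : ℝ × ℝ => p.1 + p.2) ⁻¹' B,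
          ((vε:ℝ) / ((vμ:ℝ) + (vε:ℝ))) * |p.1 + p.2|
        ∂((gaussianReal 0 vμ).prod (gaussianReal 0 vε)) := by
  have ha : (0:ℝ) < (vμ:ℝ) := coe_pos hvμ
  have hb : (0:ℝ) < (vε:ℝ) := coe_pos hvε
  have hab : (vμ:ℝ) + (vε:ℝ) ≠ 0 := by positivity
  set μ2 := (gaussianReal 0 vμ).prod (gaussianReal 0 vε) with hμ2
  set A : Set (ℝ × ℝ) := (fun p : ℝ × ℝ => p.1 + p.2) ⁻¹' B with hA
  have hAmeas : MeasurableSet A := (measurable_fst.add measurable_snd) hB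
  set c : ℝ := (vε:ℝ) / ((vμ:ℝ) + (vε:ℝ)) with hc
  set g : ℝ × ℝ → ℝ := A.indicator (fun p => sgn (p.1 + p.2) * p.2) with hg
  set g' : ℝ × ℝ → ℝ := A.indicator (fun p => c * |p.1 + p.2|) with hg'
  rw [← integral_indicator hAmeas, ← integral_indicator hAmeas]
  -- integrability of coordinates
  have hmp_snd : MeasurePreserving (Prod.snd : ℝ × ℝ → ℝ) μ2 (gaussianReal 0 vε) :=
    ⟨measurable_snd, by simp [hμ2, Measure.map_snd_prod]⟩
  have hmp_fst : MeasurePreserving (Prod.fst : ℝ × ℝ → ℝ) μ2 (gaussianReal 0 vμ) :=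
    ⟨measurable_fst, by simp [hμ2, Measure.map_fst_prod]⟩
  have hidε : Integrable (fun x : ℝ => x) (gaussianReal 0 vε) := integrable_id_gaussian vε hvε
  have hidμ : Integrable (fun x : ℝ => x) (gaussianReal 0 vμ) := integrable_id_gaussian vμ hvμ
  have hsnd : Integrable (fun p : ℝ × ℝ => p.2) μ2 :=
    (hmp_snd.integrable_comp hidε.aestronglyMeasurable).mpr hidε
  have hfst : Integrable (fun p : ℝ × ℝ => p.1) μ2 :=
    (hmp_fst.integrable_comp hidμ.aestronglyMeasurable).mpr hidμ
  -- measure preservation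
  have hmp := T_measurePreserving hvμ hvε
  have hemb : MeasurableEmbedding (T (vμ:ℝ) (vε:ℝ) : ℝ × ℝ → ℝ × ℝ) :=
    (Teqv vμ vε hvμ hvε).measurableEmbedding
  have hgmeas : Measurable g := by
    exact ((measurable_sgn.comp (measurable_fst.add measurable_snd)).mul
      measurable_snd).indicator hAmeas
  have hsgn_abs : ∀ s : ℝ, |sgn s| = 1 := by
    intro s; unfold sgn; split_ifs <;> simp
  have hgInt : Integrable g μ2 := by
    refine hsnd.abs.mono' hgmeas.aestronglyMeasurable ?_
    refine Filter.Eventually.of_forall fun p => ?_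
    rw [hg, Real.norm_eq_abs]
    by_cases hp : p ∈ A
    · rw [Set.indicator_of_mem hp, abs_mul, hsgn_abs, one_mul]
    · rw [Set.indicator_of_notMem hp, abs_zero]
      positivity
  have hgTInt : Integrable (g ∘ (T (vμ:ℝ) (vε:ℝ))) μ2 := (hmp.integrable_comp_emb hemb).mpr hgInt
  have hg'Int : Integrable g' μ2 :=
    (((hfst.add hsnd).abs.const_mul c).indicator hAmeas)
  have hint_eq : ∫ p, g (T (vμ:ℝ) (vε:ℝ) p) ∂μ2 = ∫ p, g p ∂μ2 := hmp.integral_comp hemb g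
  have hsum : ∀ p, g p + g (T (vμ:ℝ) (vε:ℝ) p) = 2 * g' p := by
    intro p
    by_cases hp : p ∈ A
    · have hTp : T (vμ:ℝ) (vε:ℝ) p ∈ A := by
        simp only [hA, Set.mem_preimage] at hp ⊢
        rw [T_sum _ _ hab p]
        exact hp
      rw [hg, hg', Set.indicator_of_mem hp, Set.indicator_of_mem hTp, Set.indicator_of_mem hp]
      rw [T_sum _ _ hab p]
      calc sgn (p.1+p.2) * p.2 + sgn (p.1+p.2) * (T (vμ:ℝ) (vε:ℝ) p).2
          = sgn (p.1+p.2) * (p.2 + (T (vμ:ℝ) (vε:ℝ) p).2) := by ring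
        _ = sgn (p.1+p.2) * (2*(vε:ℝ)/((vμ:ℝ)+(vε:ℝ)) * (p.1+p.2)) := by
            rw [T_snd_add _ _ hab p]
        _ = 2 * (c * (sgn (p.1+p.2) * (p.1+p.2))) := by rw [hc]; ring
        _ = 2 * (c * |p.1+p.2|) := by rw [sgn_mul_self]
    · have hTp : T (vμ:ℝ) (vε:ℝ) p ∉ A := by
        simp only [hA, Set.mem_preimage] at hp ⊢
        rw [T_sum _ _ hab p]
        exact hp
      rw [hg, hg', Set.indicator_of_notMem hp, Set.indicator_of_notMem hTp,
        Set.indicator_of_notMem hp]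
      ring
  have h2 : ∫ p, (g p + g (T (vμ:ℝ) (vε:ℝ) p)) ∂μ2 = ∫ p, 2 * g' p ∂μ2 := by
    exact integral_congr_ae (Filter.Eventually.of_forall hsum)
  have hgTInt' : Integrable (fun p => g (T (vμ:ℝ) (vε:ℝ) p)) μ2 := hgTInt
  have hadd : ∫ p, (g p + g (T (vμ:ℝ) (vε:ℝ) p)) ∂μ2
      = (∫ p, g p ∂μ2) + ∫ p, g (T (vμ:ℝ) (vε:ℝ) p) ∂μ2 := integral_add hgInt hgTInt'
  have h4 : ∫ p, 2 * g' p ∂μ2 = 2 * ∫ p, g' p ∂μ2 := integral_const_mul 2 _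
  show ∫ x, g x ∂μ2 = ∫ x, g' x ∂μ2
  linarith

end Main
end GED

end Aux

open GED

/-- expected decay under the Gaussian model with stable expected returns. -/
theorem gaussian_expected_decay {Ω : Type*} {F : MeasurableSpace Ω} (P : Measure Ω)
    [IsProbabilityMeasure P]
    (mu eps eps' rbar rOOS : Ω → ℝ)
    (hmu : Measurable mu) (heps : Measurable eps) (heps'Int : Integrable eps' P)
    (σμ σε : ℝ≥0) (hσμ : 0 < σμ) (hσε : 0 < σε)
    (hmuLaw : Measure.map mu P = gaussianReal 0 (σμ ^ 2))
    (hepsLaw : Measure.map eps P = gaussianReal 0 (σε ^ 2))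
    (hindep : IndepFun mu eps P)
    (hrbar : rbar = fun ω => mu ω + eps ω)
    (hrOOS : rOOS = fun ω => mu ω + eps' ω)
    (heps'0 : P[eps'|MeasurableSpace.comap (fun ω => (mu ω, eps ω)) inferInstance]
      =ᵐ[P] 0) :
    P[fun ω => sgn (rbar ω) * (rbar ω - rOOS ω)|MeasurableSpace.comap rbar inferInstance]
      =ᵐ[P] fun ω => ((σε : ℝ) ^ 2 / ((σμ : ℝ) ^ 2 + (σε : ℝ) ^ 2)) * |rbar ω| := by
  subst hrbar hrOOS
  have hvμ : σμ ^ 2 ≠ 0 := pow_ne_zero 2 (ne_of_gt hσμ)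
  have hvε : σε ^ 2 ≠ 0 := pow_ne_zero 2 (ne_of_gt hσε)
  set c : ℝ := (σε : ℝ) ^ 2 / ((σμ : ℝ) ^ 2 + (σε : ℝ) ^ 2) with hcdef
  set rbar : Ω → ℝ := fun ω => mu ω + eps ω with hrbar
  set pair : Ω → ℝ × ℝ := fun ω => (mu ω, eps ω) with hpair_def
  have hrbarMeas : Measurable rbar := hmu.add heps
  have hpairMeas : Measurable pair := hmu.prodMk heps
  have hm' : MeasurableSpace.comap rbar inferInstance ≤ F := hrbarMeas.comap_le
  have hm'' : MeasurableSpace.comap pair inferInstance ≤ F := hpairMeas.comap_le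
  have hm'm'' : MeasurableSpace.comap rbar inferInstance
      ≤ MeasurableSpace.comap pair inferInstance := by
    rw [show rbar = (fun p : ℝ × ℝ => p.1 + p.2) ∘ pair from rfl,
      ← MeasurableSpace.comap_comp]
    exact MeasurableSpace.comap_mono (measurable_iff_comap_le.mp
      (measurable_fst.add measurable_snd))
  haveI : SigmaFinite (P.trim hm') := by
    haveI := isFiniteMeasure_trim (μ := P) hm'
    infer_instance
  -- integrability
  have hmuInt : Integrable mu P := by
    have h1 : Integrable (fun x : ℝ => x) (Measure.map mu P) := by
      rw [hmuLaw]; exact integrable_id_gaussian _ hvμ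
    exact (integrable_map_measure h1.aestronglyMeasurable hmu.aemeasurable).mp h1
  have hepsInt : Integrable eps P := by
    have h1 : Integrable (fun x : ℝ => x) (Measure.map eps P) := by
      rw [hepsLaw]; exact integrable_id_gaussian _ hvε
    exact (integrable_map_measure h1.aestronglyMeasurable heps.aemeasurable).mp h1
  have hrbarInt : Integrable rbar P := hmuInt.add hepsInt
  -- joint law
  have hjoint : Measure.map pair P = (gaussianReal 0 (σμ^2)).prod (gaussianReal 0 (σε^2)) := by
    rw [hpair_def, (indepFun_iff_map_prod_eq_prod_map_map hmu.aemeasurable heps.aemeasurable).mp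
      hindep, hmuLaw, hepsLaw]
  have hsgnBdd : ∃ C, ∀ ω : Ω, ‖sgn (rbar ω)‖ ≤ C := by
    refine ⟨1, fun ω => ?_⟩
    rw [Real.norm_eq_abs]
    unfold sgn
    split_ifs <;> simp
  have hsgnMeas : Measurable (fun ω => sgn (rbar ω)) := measurable_sgn.comp hrbarMeas
  -- strong measurability of sgn ∘ rbar with respect to the pair σ-algebra
  have hrbar_m'' : Measurable[MeasurableSpace.comap pair inferInstance] rbar := by
    have hpair_m'' : Measurable[MeasurableSpace.comap pair inferInstance] pair :=
      measurable_iff_comap_le.mpr le_rfl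
    exact Measurable.comp (measurable_fst.add measurable_snd) hpair_m''
  have hsgnSM : StronglyMeasurable[MeasurableSpace.comap pair inferInstance]
      (fun ω => sgn (rbar ω)) :=
    (Measurable.comp measurable_sgn hrbar_m'').stronglyMeasurable
  -- integrable products
  have hf1Int : Integrable (fun ω => sgn (rbar ω) * eps ω) P :=
    hepsInt.bdd_mul hsgnMeas.aestronglyMeasurable (Filter.Eventually.of_forall hsgnBdd.choose_spec)
  have hf2Int : Integrable (fun ω => sgn (rbar ω) * eps' ω) P :=
    heps'Int.bdd_mul hsgnMeas.aestronglyMeasurable (Filter.Eventually.of_forall hsgnBdd.choose_spec)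
  have hφInt : Integrable (fun ω => sgn (rbar ω) * (rbar ω - (mu ω + eps' ω))) P := by
    have heq : (fun ω => sgn (rbar ω) * (rbar ω - (mu ω + eps' ω)))
        = fun ω => sgn (rbar ω) * (eps ω - eps' ω) := by
      funext ω; rw [hrbar]; ring_nf
    rw [heq]
    exact (hepsInt.sub heps'Int).bdd_mul hsgnMeas.aestronglyMeasurable (Filter.Eventually.of_forall hsgnBdd.choose_spec)
  -- conditional expectation of sgn(rbar) * eps' wrt the pair σ-algebra is 0
  have hcond2 : P[(fun ω => sgn (rbar ω) * eps' ω)|MeasurableSpace.comap pair inferInstance]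
      =ᵐ[P] 0 := by
    have hpull : P[(fun ω => sgn (rbar ω)) * eps'|MeasurableSpace.comap pair inferInstance]
        =ᵐ[P] (fun ω => sgn (rbar ω)) * P[eps'|MeasurableSpace.comap pair inferInstance] :=
      condExp_mul_of_stronglyMeasurable_left hsgnSM hf2Int heps'Int
    refine hpull.trans ?_
    filter_upwards [heps'0] with ω hω
    simp only [Pi.mul_apply, hω, Pi.zero_apply, mul_zero]
  refine (ae_eq_condExp_of_forall_setIntegral_eq hm' hφInt ?_ ?_ ?_).symm
  · intro s _ _
    exact ((hrbarInt.abs.const_mul c)).integrableOn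
  · rintro s ⟨B, hB, rfl⟩ -
    have hs_meas : MeasurableSet (rbar ⁻¹' B) := hrbarMeas hB
    have hs_m'' : MeasurableSet[MeasurableSpace.comap pair inferInstance] (rbar ⁻¹' B) :=
      hm'm'' _ ⟨B, hB, rfl⟩
    -- split the right-hand side
    have hsplit : ∫ ω in rbar ⁻¹' B, sgn (rbar ω) * (rbar ω - (mu ω + eps' ω)) ∂P
        = (∫ ω in rbar ⁻¹' B, sgn (rbar ω) * eps ω ∂P)
          - ∫ ω in rbar ⁻¹' B, sgn (rbar ω) * eps' ω ∂P := by
      rw [← integral_sub hf1Int.integrableOn hf2Int.integrableOn]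
      refine setIntegral_congr_ae hs_meas ?_
      refine Filter.Eventually.of_forall fun ω _ => ?_
      rw [hrbar]; ring
    have hzero : ∫ ω in rbar ⁻¹' B, sgn (rbar ω) * eps' ω ∂P = 0 := by
      rw [← setIntegral_condExp hm'' hf2Int hs_m'']
      rw [setIntegral_congr_ae (hm'' _ hs_m'') (hcond2.mono fun ω hω _ => hω)]
      simp
    -- change of variables to the product gaussian
    have hAmeas : MeasurableSet ((fun p : ℝ × ℝ => p.1 + p.2) ⁻¹' B) :=
      (measurable_fst.add measurable_snd) hB
    have hkey := key_integral hvμ hvε hB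
    have hHmeas : Measurable (fun p : ℝ × ℝ => sgn (p.1 + p.2) * p.2) :=
      (measurable_sgn.comp (measurable_fst.add measurable_snd)).mul measurable_snd
    have hchg1 : ∫ ω in rbar ⁻¹' B, sgn (rbar ω) * eps ω ∂P
        = ∫ p in (fun p : ℝ × ℝ => p.1 + p.2) ⁻¹' B, sgn (p.1 + p.2) * p.2
            ∂((gaussianReal 0 (σμ^2)).prod (gaussianReal 0 (σε^2))) := by
      rw [← hjoint, setIntegral_map hAmeas
        (hHmeas.aestronglyMeasurable) hpairMeas.aemeasurable]
      rfl
    have hchg2 : ∫ ω in rbar ⁻¹' B, c * |rbar ω| ∂P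
        = ∫ p in (fun p : ℝ × ℝ => p.1 + p.2) ⁻¹' B, c * |p.1 + p.2|
            ∂((gaussianReal 0 (σμ^2)).prod (gaussianReal 0 (σε^2))) := by
      rw [← hjoint, setIntegral_map (f := fun p : ℝ × ℝ => c * |p.1 + p.2|) hAmeas
        ((((measurable_fst.add measurable_snd).abs.const_mul c)).aestronglyMeasurable)
        hpairMeas.aemeasurable]
      rfl
    have hcast : ((σε^2 : ℝ≥0) : ℝ) / (((σμ^2 : ℝ≥0) : ℝ) + ((σε^2 : ℝ≥0) : ℝ)) = c := by
      rw [hcdef]; push_cast; ring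
    rw [hsplit, hzero, sub_zero, hchg1, hchg2, hkey, hcast]
  · have hrbar_m' : Measurable[MeasurableSpace.comap rbar inferInstance] rbar :=
      measurable_iff_comap_le.mpr le_rfl
    exact (Measurable.comp (measurable_id.abs.const_mul c)
      hrbar_m').stronglyMeasurable.aestronglyMeasurable
end

section
/- (Decay under sign-only selection) Let μ and ε be independent integrable random variables with ε symmetric about 0, and r̄ = μ + ε, r̄^OOS = μ + ε' with E[ε' | σ(μ, ε)] = 0. If additionally μ is symmetric about 0, then E[sign(r̄)·(r̄ − r̄^OOS)] = E[sign(r̄)·ε] ≥ 0, with equality if and only if sign(μ + ε)·ε has mean zero. -/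
open MeasureTheory ProbabilityTheory

lemma sgn_meas : Measurable sgn := by
  unfold sgn
  exact Measurable.ite (measurableSet_le measurable_const measurable_id)
    measurable_const measurable_const

lemma sgn_bdd (x : ℝ) : ‖sgn x‖ ≤ 1 := by
  unfold sgn; split_ifs <;> simp

lemma sgn_key (a b : ℝ) : 0 ≤ sgn (a + b) * b + sgn (a - b) * (-b) := by
  unfold sgn
  split_ifs <;> linarith

/-- decay under sign-only selection. -/
theorem sign_only_selection_decay {Ω : Type*} {F : MeasurableSpace Ω} (P : Measure Ω)
    [IsProbabilityMeasure P]
    (mu eps eps' rbar rOOS : Ω → ℝ)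
    (hmu : Measurable mu) (heps : Measurable eps)
    (hmuInt : Integrable mu P) (hepsInt : Integrable eps P) (heps'Int : Integrable eps' P)
    (hindep : IndepFun mu eps P)
    (hsymmEps : Measure.map eps P = Measure.map (fun ω => -eps ω) P)
    (hsymmMu : Measure.map mu P = Measure.map (fun ω => -mu ω) P)
    (hrbar : rbar = fun ω => mu ω + eps ω)
    (hrOOS : rOOS = fun ω => mu ω + eps' ω)
    (heps'0 : P[eps'|MeasurableSpace.comap (fun ω => (mu ω, eps ω)) inferInstance]
      =ᵐ[P] 0) :
    (∫ ω, sgn (rbar ω) * (rbar ω - rOOS ω) ∂P = ∫ ω, sgn (rbar ω) * eps ω ∂P) ∧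
    0 ≤ ∫ ω, sgn (rbar ω) * eps ω ∂P ∧
    (∫ ω, sgn (rbar ω) * eps ω ∂P = 0 ↔ ∫ ω, sgn (mu ω + eps ω) * eps ω ∂P = 0) := by
  subst hrbar hrOOS
  have hpairm : Measurable fun ω => (mu ω, eps ω) := hmu.prodMk heps
  have hm : MeasurableSpace.comap (fun ω => (mu ω, eps ω))
      inferInstance ≤ F := hpairm.comap_le
  haveI : SigmaFinite (P.trim hm) := by
    have : IsFiniteMeasure (P.trim hm) := isFiniteMeasure_trim hm
    infer_instance
  have hsgnmeas : Measurable fun ω => sgn (mu ω + eps ω) :=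
    sgn_meas.comp (hmu.add heps)
  have hsgnbdd : ∃ C, ∀ ω, ‖sgn (mu ω + eps ω)‖ ≤ C := ⟨1, fun ω => sgn_bdd _⟩
  have hInt1 : Integrable (fun ω => sgn (mu ω + eps ω) * eps ω) P :=
    hepsInt.bdd_mul hsgnmeas.aestronglyMeasurable (Filter.Eventually.of_forall fun ω => sgn_bdd _)
  have hInt2 : Integrable (fun ω => sgn (mu ω + eps ω) * eps' ω) P :=
    heps'Int.bdd_mul hsgnmeas.aestronglyMeasurable (Filter.Eventually.of_forall fun ω => sgn_bdd _)
  -- the set where the sign is +1, measurable w.r.t. the comap σ-algebra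
  have hAm : MeasurableSet[MeasurableSpace.comap (fun ω => (mu ω, eps ω)) inferInstance]
      {ω | 0 ≤ mu ω + eps ω} := by
    refine ⟨{p : ℝ × ℝ | 0 ≤ p.1 + p.2}, ?_, rfl⟩
    exact measurableSet_le measurable_const (measurable_fst.add measurable_snd)
  have hA : MeasurableSet {ω | 0 ≤ mu ω + eps ω} := hm _ hAm
  -- ∫ sgn(rbar) * eps' = 0
  have hcond : ∀ (s : Set Ω),
      MeasurableSet[MeasurableSpace.comap (fun ω => (mu ω, eps ω)) inferInstance] s →
      ∫ ω in s, eps' ω ∂P = 0 := by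
    intro s hs
    rw [← setIntegral_condExp hm heps'Int hs]
    calc ∫ ω in s, (P[eps'|MeasurableSpace.comap (fun ω => (mu ω, eps ω)) inferInstance]) ω ∂P
        = ∫ ω in s, (0 : ℝ) ∂P :=
          setIntegral_congr_ae (hm s hs) (heps'0.mono fun ω h _ => h)
      _ = 0 := by simp
  have hzero : ∫ ω, sgn (mu ω + eps ω) * eps' ω ∂P = 0 := by
    have hsplit : ∀ ω, sgn (mu ω + eps ω) * eps' ω
        = ({ω | 0 ≤ mu ω + eps ω} : Set Ω).indicator eps' ω
          - ({ω | 0 ≤ mu ω + eps ω} : Set Ω)ᶜ.indicator eps' ω := by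
      intro ω
      by_cases h : 0 ≤ mu ω + eps ω
      · simp [sgn, h, Set.indicator_of_mem (h : ω ∈ {ω | 0 ≤ mu ω + eps ω}),
          Set.indicator_of_notMem (by simp [h] : ω ∉ ({ω | 0 ≤ mu ω + eps ω} : Set Ω)ᶜ)]
      · simp [sgn, h, Set.indicator_of_notMem (h : ω ∉ {ω | 0 ≤ mu ω + eps ω}),
          Set.indicator_of_mem (by simp [h] : ω ∈ ({ω | 0 ≤ mu ω + eps ω} : Set Ω)ᶜ)]
    simp only [hsplit]
    rw [integral_sub (heps'Int.indicator hA) (heps'Int.indicator hA.compl),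
      integral_indicator hA, integral_indicator hA.compl,
      hcond _ hAm, hcond _ hAm.compl]
    simp
  have part1 : ∫ ω, sgn (mu ω + eps ω) * ((mu ω + eps ω) - (mu ω + eps' ω)) ∂P
      = ∫ ω, sgn (mu ω + eps ω) * eps ω ∂P := by
    have heq : ∀ ω, sgn (mu ω + eps ω) * ((mu ω + eps ω) - (mu ω + eps' ω))
        = sgn (mu ω + eps ω) * eps ω - sgn (mu ω + eps ω) * eps' ω := by
      intro ω; ring
    simp only [heq]
    rw [integral_sub hInt1 hInt2, hzero, sub_zero]
  refine ⟨part1, ?_, Iff.rfl⟩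
  show 0 ≤ ∫ ω, sgn (mu ω + eps ω) * eps ω ∂P
  -- law of (mu, eps) equals law of (mu, -eps)
  have hindep' : IndepFun mu (fun ω => -eps ω) P :=
    hindep.comp measurable_id measurable_neg
  have hlaw : Measure.map (fun ω => (mu ω, eps ω)) P
      = Measure.map (fun ω => (mu ω, -eps ω)) P := by
    rw [(indepFun_iff_map_prod_eq_prod_map_map hmu.aemeasurable
        heps.aemeasurable).mp hindep,
      (indepFun_iff_map_prod_eq_prod_map_map hmu.aemeasurable
        (show Measurable fun ω => -eps ω from heps.neg).aemeasurable).mp hindep', hsymmEps]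
  have hfmeas : Measurable fun p : ℝ × ℝ => sgn (p.1 + p.2) * p.2 :=
    (sgn_meas.comp (measurable_fst.add measurable_snd)).mul measurable_snd
  have key : ∫ ω, sgn (mu ω + eps ω) * eps ω ∂P
      = ∫ ω, sgn (mu ω - eps ω) * (-eps ω) ∂P := by
    have h1 : ∫ ω, sgn (mu ω + eps ω) * eps ω ∂P
        = ∫ p, sgn (p.1 + p.2) * p.2 ∂(Measure.map (fun ω => (mu ω, eps ω)) P) := by
      rw [integral_map hpairm.aemeasurable hfmeas.aestronglyMeasurable]
    have h2 : ∫ p, sgn (p.1 + p.2) * p.2 ∂(Measure.map (fun ω => (mu ω, -eps ω)) P)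
        = ∫ ω, sgn (mu ω - eps ω) * (-eps ω) ∂P := by
      rw [integral_map (hmu.prodMk (show Measurable fun ω => -eps ω from heps.neg)).aemeasurable hfmeas.aestronglyMeasurable]
      simp [sub_eq_add_neg]
    rw [h1, hlaw, h2]
  have hsgnmeas2 : Measurable fun ω => sgn (mu ω - eps ω) :=
    sgn_meas.comp (hmu.sub heps)
  have hIntneg : Integrable (fun ω => sgn (mu ω - eps ω) * (-eps ω)) P :=
    hepsInt.neg.bdd_mul hsgnmeas2.aestronglyMeasurable (Filter.Eventually.of_forall fun ω => sgn_bdd _)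
  have htwo : 2 * ∫ ω, sgn (mu ω + eps ω) * eps ω ∂P
      = ∫ ω, (sgn (mu ω + eps ω) * eps ω + sgn (mu ω - eps ω) * (-eps ω)) ∂P := by
    rw [integral_add hInt1 hIntneg, ← key]; ring
  have hnn : 0 ≤ ∫ ω, (sgn (mu ω + eps ω) * eps ω + sgn (mu ω - eps ω) * (-eps ω)) ∂P :=
    integral_nonneg fun ω => sgn_key (mu ω) (eps ω)
  linarith [htwo ▸ hnn]
end
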